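/- arXiv:1808.10481 — 3 statements merged into one kernel-verified Lean document; each statement's English description precedes it below -/
import Mathlib

section
/- Let I be a linear projection on a semi-inner-product space satisfying the orthogonality ⟨I f, g − I g⟩ = 0 for all f,g, and let S± be seminorm-preserving operators with S₊S₋ = Id. Suppose P±ʰ, V±ʰ lie in the range of I and evolve by P±ʰ(t+Δt) = ∓ I S∓ V±ʰ(t+Δt/2) ∓ (1−I) S± V∓ʰ(t+Δt/2). Then Qʰ(t+Δt) = Rʰ(t+Δt/2), where Qʰ(t) = |P₊ʰ(t)|² + |P₋ʰ(t)|² and Rʰ(t+Δt/2) = |V₊ʰ(t+Δt/2)|² + |V₋ʰ(t+Δt/2)|², with |·| the induced seminorm. -/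
/-- Discrete energy conservation for the Hermite-leapfrog scheme. With `B` a
positive semidefinite symmetric bilinear form, `I` an orthogonal projection
(the Hermite interpolation operator), and `S±` seminorm-preserving mutually
inverse shifts, the discrete characteristic variables satisfy
`Qʰ(t+Δt) = Rʰ(t+Δt/2)`, where `Qʰ = |P₊ʰ|² + |P₋ʰ|²` and
`Rʰ = |V₊ʰ|² + |V₋ʰ|²`. -/
theorem discrete_energy_transfer
    {V : Type*} [AddCommGroup V] [Module ℝ V]
    (B : V →ₗ[ℝ] V →ₗ[ℝ] ℝ)
    (hsymm : ∀ f g : V, B f g = B g f)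
    (hpos : ∀ f : V, 0 ≤ B f f)
    (I : V →ₗ[ℝ] V)
    (hproj : ∀ f : V, I (I f) = I f)
    (horth : ∀ f g : V, B (I f) (g - I g) = 0)
    (Sp Sm : V →ₗ[ℝ] V)
    (hSp : ∀ f : V, B (Sp f) (Sp f) = B f f)
    (hSm : ∀ f : V, B (Sm f) (Sm f) = B f f)
    (hps : ∀ f : V, Sp (Sm f) = f) (hsp : ∀ f : V, Sm (Sp f) = f)
    (Pp Pm Vp Vm : ℕ → V)
    (hVpI : ∀ n, I (Vp n) = Vp n) (hVmI : ∀ n, I (Vm n) = Vm n)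
    (hPp : ∀ n, Pp (n + 1) = -(I (Sm (Vp n))) - (Sp (Vm n) - I (Sp (Vm n))))
    (hPm : ∀ n, Pm (n + 1) = I (Sp (Vm n)) + (Sm (Vp n) - I (Sm (Vp n)))) :
    ∀ n : ℕ,
      B (Pp (n + 1)) (Pp (n + 1)) + B (Pm (n + 1)) (Pm (n + 1))
        = B (Vp n) (Vp n) + B (Vm n) (Vm n) := by

  intro n
  have horth' : ∀ f g : V, B (g - I g) (I f) = 0 := fun f g => by
    rw [hsymm]; exact horth f g
  have key : ∀ x y : V, B (I x + (y - I y)) (I x + (y - I y))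
      = B (I x) (I x) + B (y - I y) (y - I y) := by
    intro x y
    have e1 := horth x y
    have e2 := horth' x y
    simp only [map_add, LinearMap.add_apply]
    rw [e1, e2]; ring
  have pyth : ∀ x : V, B x x = B (I x) (I x) + B (x - I x) (x - I x) := by
    intro x
    have : x = I x + (x - I x) := by abel
    conv_lhs => rw [this]
    exact key x x
  set a := Sm (Vp n)
  set b := Sp (Vm n)
  have h1 : Pp (n + 1) = -(I a + (b - I b)) := by rw [hPp n]; abel
  have h2 : Pm (n + 1) = I b + (a - I a) := hPm n
  have hnegPp : B (Pp (n + 1)) (Pp (n + 1)) = B (I a) (I a) + B (b - I b) (b - I b) := by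
    rw [h1]
    have : B (-(I a + (b - I b))) (-(I a + (b - I b)))
        = B (I a + (b - I b)) (I a + (b - I b)) := by
      simp only [map_neg, LinearMap.neg_apply, neg_neg]
    rw [this, key a b]
  have hPm' : B (Pm (n + 1)) (Pm (n + 1)) = B (I b) (I b) + B (a - I a) (a - I a) := by
    rw [h2]; exact key b a
  have ha : B a a = B (Vp n) (Vp n) := hSm (Vp n)
  have hb : B b b = B (Vm n) (Vm n) := hSp (Vm n)
  rw [hnegPp, hPm', ← ha, ← hb, pyth a, pyth b]
  ring
end

section
/- Let (a_n), (b_n) be nonnegative real sequences satisfying a_{n+1} ≤ b_n + C₁√(b_n) + C₂ and b_n ≤ a_n + C₁√(a_n) + C₂ for all n, with a_0 ≤ A. Then the running maximum Ê_n = max over j ≤ n of (a_j, b_j) satisfies Ê_n ≤ Ê_0 + 2n C₁ √(Ê_n) + 2n C₂; consequently, if a_0 ≤ C h^{2m+2}, C₁ = C Δt h^{m+1}, C₂ = C Δt² h^{2m+2}, and nΔt = t_n, then Ê_n ≤ C'(1 + t_n²) h^{2m+2} for some constant C' independent of h and n. -/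
/-!
Each time step (two half steps) raises the running maximum `Eₙ` by at most
`2 C₁ √Eₙ₊₁ + 2 C₂`; summing the increments gives `Eₙ ≤ E₀ + 2n C₁ √Eₙ + 2n C₂`, and Young's inequality
`2n C₁ √Eₙ ≤ Eₙ / 2 + 2 n² C₁²` absorbs the square root. With `C₁ = C Δt h^{m+1}` and
`C₂ = C Δt² h^{2m+2}`, both `n² C₁²` and `n C₂` are of order `(1 + t_n²) h^{2m+2}`.
-/

/-- Running maximum `Ê_n = max_{j ≤ n} (a_j, b_j)`. -/
noncomputable def runMax (a b : ℕ → ℝ) (n : ℕ) : ℝ :=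
  (Finset.range (n + 1)).sup' Finset.nonempty_range_add_one (fun j => max (a j) (b j))

section RunMax

variable (a b : ℕ → ℝ)

lemma le_runMax {j n : ℕ} (hj : j ≤ n) : max (a j) (b j) ≤ runMax a b n :=
  Finset.le_sup' (fun j => max (a j) (b j)) (Finset.mem_range.mpr (Nat.lt_succ_of_le hj))

variable {a b}

lemma runMax_le {n : ℕ} {c : ℝ} (H : ∀ j ≤ n, max (a j) (b j) ≤ c) : runMax a b n ≤ c :=
  Finset.sup'_le _ _ fun j hj => H j (Nat.lt_succ_iff.mp (Finset.mem_range.mp hj))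

variable (a b)

lemma runMax_mono : Monotone (runMax a b) :=
  fun _ _ hmn => runMax_le fun _ hj => le_runMax a b (hj.trans hmn)

lemma runMax_zero : runMax a b 0 = max (a 0) (b 0) := by
  simp [runMax]

variable {a b}

lemma runMax_nonneg (ha : 0 ≤ a 0) (n : ℕ) : 0 ≤ runMax a b n :=
  ha.trans ((le_max_left _ _).trans (le_runMax a b n.zero_le))

end RunMax

section Recursion

variable {a b : ℕ → ℝ} {C₁ C₂ : ℝ}

lemma runMax_zero_le (hC₁ : 0 ≤ C₁) (hC₂ : 0 ≤ C₂)
    (hba : b 0 ≤ a 0 + C₁ * √(a 0) + C₂) :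
    runMax a b 0 ≤ a 0 + C₁ * √(a 0) + C₂ := by
  rw [runMax_zero]
  exact max_le (by have := Real.sqrt_nonneg (a 0); nlinarith) hba

lemma runMax_succ_le (hC₁ : 0 ≤ C₁) (hC₂ : 0 ≤ C₂)
    (hab : ∀ n, a (n + 1) ≤ b n + C₁ * √(b n) + C₂)
    (hba : ∀ n, b n ≤ a n + C₁ * √(a n) + C₂) (k : ℕ) :
    runMax a b (k + 1) ≤ runMax a b k + 2 * C₁ * √(runMax a b (k + 1)) + 2 * C₂ := by
  set E := runMax a b
  have hEk : E k ≤ E (k + 1) := runMax_mono a b k.le_succ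
  have hak : a (k + 1) ≤ E (k + 1) := (le_max_left _ _).trans (le_runMax a b le_rfl)
  have hbk : b k ≤ E k := (le_max_right _ _).trans (le_runMax a b le_rfl)
  have hsb : C₁ * √(b k) ≤ C₁ * √(E (k + 1)) :=
    mul_le_mul_of_nonneg_left (Real.sqrt_le_sqrt (hbk.trans hEk)) hC₁
  have hsa : C₁ * √(a (k + 1)) ≤ C₁ * √(E (k + 1)) :=
    mul_le_mul_of_nonneg_left (Real.sqrt_le_sqrt hak) hC₁
  have hs : 0 ≤ C₁ * √(E (k + 1)) := mul_nonneg hC₁ (Real.sqrt_nonneg _)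
  have ha_succ : a (k + 1) ≤ E k + C₁ * √(E (k + 1)) + C₂ := by linarith [hab k]
  refine runMax_le fun j hj => ?_
  rcases hj.lt_or_eq with hj | rfl
  · linarith [le_runMax a b (Nat.lt_succ_iff.mp hj)]
  · exact max_le (by linarith) (by linarith [hba (k + 1)])

end Recursion

lemma Monotone.le_add_mul_sqrt_of_forall_succ_le {E : ℕ → ℝ} (hE : Monotone E) {c₁ c₂ : ℝ}
    (hc₁ : 0 ≤ c₁) (hstep : ∀ k, E (k + 1) ≤ E k + c₁ * √(E (k + 1)) + c₂) (n : ℕ) :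
    E n ≤ E 0 + n * c₁ * √(E n) + n * c₂ := by
  induction n with
  | zero => simp
  | succ k ih =>
    have hsqrt : k * c₁ * √(E k) ≤ k * c₁ * √(E (k + 1)) :=
      mul_le_mul_of_nonneg_left (Real.sqrt_le_sqrt (hE k.le_succ)) (by positivity)
    push_cast
    linarith [hstep k]

lemma le_two_mul_add_sq_of_le_add_mul_sqrt {x x₀ β γ : ℝ} (hx : 0 ≤ x)
    (h : x ≤ x₀ + β * √x + γ) : x ≤ 2 * x₀ + β ^ 2 + 2 * γ := by
  nlinarith [sq_nonneg (√x - β), Real.sq_sqrt hx]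

lemma runMax_le_runMax_zero_add {a b : ℕ → ℝ} {C₁ C₂ : ℝ} (hC₁ : 0 ≤ C₁) (hC₂ : 0 ≤ C₂)
    (hab : ∀ n, a (n + 1) ≤ b n + C₁ * √(b n) + C₂)
    (hba : ∀ n, b n ≤ a n + C₁ * √(a n) + C₂) (n : ℕ) :
    runMax a b n ≤ runMax a b 0 + 2 * n * C₁ * √(runMax a b n) + 2 * n * C₂ := by
  have := (runMax_mono a b).le_add_mul_sqrt_of_forall_succ_le (c₂ := 2 * C₂) (by positivity)
    (runMax_succ_le hC₁ hC₂ hab hba) n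
  linear_combination this

lemma runMax_le_mul_one_add_sq {a b : ℕ → ℝ} {C Δt H : ℝ} (hC : 0 ≤ C) (hΔt : 0 ≤ Δt)
    (hH : 0 ≤ H) (ha : 0 ≤ a 0)
    (hab : ∀ n, a (n + 1) ≤ b n + C * Δt * H * √(b n) + C * Δt ^ 2 * H ^ 2)
    (hba : ∀ n, b n ≤ a n + C * Δt * H * √(a n) + C * Δt ^ 2 * H ^ 2)
    (ha₀ : a 0 ≤ C * H ^ 2) (n : ℕ) :
    runMax a b n ≤
      (2 * (C + C * √C * Δt + C * Δt ^ 2) + 4 * C ^ 2 + 4 * C * Δt) * (1 + (n * Δt) ^ 2)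
        * H ^ 2 := by
  have hC₁ : 0 ≤ C * Δt * H := by positivity
  have hC₂ : 0 ≤ C * Δt ^ 2 * H ^ 2 := by positivity
  have hsqrt : C * Δt * H * √(a 0) ≤ C * Δt * H * (√C * H) := by
    refine mul_le_mul_of_nonneg_left ?_ hC₁
    calc √(a 0) ≤ √(C * H ^ 2) := Real.sqrt_le_sqrt ha₀
      _ = √C * H := by rw [Real.sqrt_mul hC, Real.sqrt_sq hH]
  have hE₀ : runMax a b 0 ≤ (C + C * √C * Δt + C * Δt ^ 2) * H ^ 2 := by
    linarith [runMax_zero_le hC₁ hC₂ (hba 0)]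
  have hEn := le_two_mul_add_sq_of_le_add_mul_sqrt (runMax_nonneg ha n)
    (runMax_le_runMax_zero_add hC₁ hC₂ hab hba n)
  have hx : (n : ℝ) * Δt ≤ 1 + (n * Δt) ^ 2 := by nlinarith [sq_nonneg ((n : ℝ) * Δt - 1)]
  have hK : 0 ≤ C + C * √C * Δt + C * Δt ^ 2 := by positivity
  nlinarith [mul_le_mul_of_nonneg_left hx (by positivity : 0 ≤ 4 * C * Δt * H ^ 2),
    mul_nonneg (mul_nonneg hK (sq_nonneg ((n : ℝ) * Δt))) (sq_nonneg H),
    mul_nonneg (sq_nonneg C) (sq_nonneg H)]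

/-- Discrete Grönwall-type estimate for the Hermite-leapfrog convergence proof:
with `C₁ = C Δt h^{m+1}`, `C₂ = C Δt² h^{2m+2}` and `a₀ ≤ C h^{2m+2}`, the running
maximum satisfies `Ê_n ≤ Ê_0 + 2n C₁ √Ê_n + 2n C₂`, and consequently
`Ê_n ≤ C'(1 + t_n²) h^{2m+2}` for a constant `C'` independent of `h` and `n`. -/
theorem discrete_gronwall_estimate
    (C Δt : ℝ) (hC : 0 < C) (hΔt : 0 < Δt) :
    ∃ C' : ℝ, 0 < C' ∧
      ∀ (h : ℝ) (m : ℕ) (a b : ℕ → ℝ), 0 < h →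
        (∀ n, 0 ≤ a n) → (∀ n, 0 ≤ b n) →
        (∀ n, a (n + 1) ≤ b n + (C * Δt * h ^ (m + 1)) * Real.sqrt (b n)
            + C * Δt ^ 2 * h ^ (2 * m + 2)) →
        (∀ n, b n ≤ a n + (C * Δt * h ^ (m + 1)) * Real.sqrt (a n)
            + C * Δt ^ 2 * h ^ (2 * m + 2)) →
        a 0 ≤ C * h ^ (2 * m + 2) →
        ∀ n : ℕ,
          runMax a b n ≤ runMax a b 0
              + 2 * n * (C * Δt * h ^ (m + 1)) * Real.sqrt (runMax a b n)
              + 2 * n * (C * Δt ^ 2 * h ^ (2 * m + 2)) ∧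
          runMax a b n ≤ C' * (1 + ((n : ℝ) * Δt) ^ 2) * h ^ (2 * m + 2) := by
  refine ⟨2 * (C + C * √C * Δt + C * Δt ^ 2) + 4 * C ^ 2 + 4 * C * Δt, by positivity, ?_⟩
  intro h m a b hh ha _ hab hba ha₀ n
  have hpow : h ^ (2 * m + 2) = (h ^ (m + 1)) ^ 2 := by ring
  rw [hpow] at hab hba ha₀ ⊢
  exact ⟨runMax_le_runMax_zero_add (by positivity) (by positivity) hab hba n,
    runMax_le_mul_one_add_sq hC.le hΔt.le (by positivity) (ha 0) hab hba ha₀ n⟩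
end

section
/- For m = 1 and 0 < λ < 1 with λ ≠ 1, there exists a nonconstant polynomial g of degree at most 3 with g(0) = 0 satisfying g^{(j)}(1/2) − g^{(j)}(−1/2) = 0 and g^{(j)}(λ/2) − g^{(j)}(−λ/2) = 0 for j = 1, and g(1/2) − g(−1/2) = 0, g(λ/2) − g(−λ/2) = 1; i.e., the generalized eigenvector equation D̂(0) ĝ = e₁ is solvable. -/
open Polynomial

/-! The witness is the odd cubic `g = c (X - 4 X³)` with `c = (λ - λ³)⁻¹`. Oddness of `g` makes
`g'` even, so both derivative conditions hold automatically, and turns the remaining differences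
into `2 g(x)`; the factor `X - 4 X³` vanishes at `1/2`, and `2 g(λ/2) = c (λ - λ³) = 1`. -/

section OddPolynomial

variable {R : Type*} [CommRing R] {p : R[X]}

theorem derivative_comp_neg_X_of_comp_neg_X_eq_neg (hp : p.comp (-X) = -p) :
    p.derivative.comp (-X) = p.derivative := by
  have h := congrArg derivative hp
  rw [derivative_comp, derivative_neg, derivative_X, derivative_neg] at h
  simpa using h

theorem eval_sub_eval_neg_of_comp_neg_X_eq_neg (hp : p.comp (-X) = -p) (x : R) :
    p.eval x - p.eval (-x) = 2 * p.eval x := by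
  have h := congrArg (eval x) hp
  rw [eval_comp, eval_neg, eval_X, eval_neg] at h
  rw [h]
  ring

theorem derivative_eval_sub_eval_neg_of_comp_neg_X_eq_neg (hp : p.comp (-X) = -p) (x : R) :
    p.derivative.eval x - p.derivative.eval (-x) = 0 := by
  have h := congrArg (eval x) (derivative_comp_neg_X_of_comp_neg_X_eq_neg hp)
  rw [eval_comp, eval_neg, eval_X] at h
  rw [h, sub_self]

end OddPolynomial

section OddCubic

variable {R : Type*} [CommRing R]

noncomputable def oddCubic (c : R) : R[X] := C c * (X - C 4 * X ^ 3)

theorem oddCubic_comp_neg_X (c : R) : (oddCubic c).comp (-X) = -oddCubic c := by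
  simp only [oddCubic, mul_comp, sub_comp, C_comp, X_comp, pow_comp]
  ring

theorem eval_oddCubic (c x : R) : (oddCubic c).eval x = c * (x - 4 * x ^ 3) := by
  simp [oddCubic]

theorem natDegree_oddCubic [NoZeroDivisors R] [CharZero R] {c : R} (hc : c ≠ 0) :
    (oddCubic c).natDegree = 3 := by
  unfold oddCubic
  compute_degree!

end OddCubic

/-- Dispersion analysis, odd case `m = 1`: for `0 < λ < 1` there exists a
nonconstant polynomial `g` of degree at most `3` with `g(0) = 0` satisfying the
homogeneous conditions `g(1/2) = g(−1/2)`, `g'(1/2) = g'(−1/2)`,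
`g'(λ/2) = g'(−λ/2)` and the inhomogeneous condition `g(λ/2) − g(−λ/2) = 1`;
i.e. the generalized eigenvector equation `D̂(0) ĝ = e₁` is solvable. -/
theorem dispersion_m_one_generalized_eigenvector
    (lam : ℝ) (h0 : 0 < lam) (h1 : lam < 1) :
    ∃ g : Polynomial ℝ, g.degree ≤ 3 ∧ 0 < g.natDegree ∧
      g.eval 0 = 0 ∧
      g.eval (1 / 2) - g.eval (-(1 / 2)) = 0 ∧
      g.eval (lam / 2) - g.eval (-(lam / 2)) = 1 ∧
      g.derivative.eval (1 / 2) - g.derivative.eval (-(1 / 2)) = 0 ∧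
      g.derivative.eval (lam / 2) - g.derivative.eval (-(lam / 2)) = 0 := by
  have hpos : 0 < lam - lam ^ 3 := by
    have : 0 < lam * (1 - lam) * (1 + lam) := by positivity
    nlinarith
  have hc : (lam - lam ^ 3)⁻¹ * (lam - lam ^ 3) = 1 := inv_mul_cancel₀ hpos.ne'
  have hdeg := natDegree_oddCubic (inv_ne_zero hpos.ne')
  have hodd := oddCubic_comp_neg_X (lam - lam ^ 3)⁻¹
  refine ⟨oddCubic (lam - lam ^ 3)⁻¹, degree_le_natDegree.trans (by exact_mod_cast hdeg.le),
    by rw [hdeg]; norm_num, by simp [eval_oddCubic], ?_, ?_,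
    derivative_eval_sub_eval_neg_of_comp_neg_X_eq_neg hodd _,
    derivative_eval_sub_eval_neg_of_comp_neg_X_eq_neg hodd _⟩
  · rw [eval_sub_eval_neg_of_comp_neg_X_eq_neg hodd, eval_oddCubic]
    ring
  · rw [eval_sub_eval_neg_of_comp_neg_X_eq_neg hodd, eval_oddCubic, ← hc]
    ring
end
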